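/- For every (x, y, d) ∈ ℝ³ with x, y ≥ 0 and xy ≥ |d|, the infimum h(x,y,d) = inf{ g(ξ,η,d) : ξ ≥ x, η ≥ y } is attained, i.e., there exist ξ ≥ x and η ≥ y with g(ξ,η,d) = h(x,y,d). -/
import Mathlib


noncomputable section

def Afun (l x y d : ℝ) : ℝ :=
  (x ^ 2 + y ^ 2) * (l ^ 2 + 1 / l ^ 2) / 2
    + (l ^ 2 - 1 / l ^ 2) * Real.sqrt (x ^ 2 * y ^ 2 - d ^ 2) + 2 * d

def gfun (l x y d : ℝ) : ℝ :=
  x ^ 2 + y ^ 2 + (l ^ 2 + 1 / l ^ 2) - 2 * Real.sqrt (Afun l x y d)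

def hfun (l x y d : ℝ) : ℝ :=
  sInf {r | ∃ ξ η : ℝ, x ≤ ξ ∧ y ≤ η ∧ r = gfun l ξ η d}

lemma my_sqrt_add_le (a b : ℝ) (ha : 0 ≤ a) (hb : 0 ≤ b) :
    Real.sqrt (a + b) ≤ Real.sqrt a + Real.sqrt b := by
  have h1 := Real.sq_sqrt ha
  have h2 := Real.sq_sqrt hb
  have h3 := Real.sqrt_nonneg a
  have h4 := Real.sqrt_nonneg b
  have key : Real.sqrt (a + b) ≤ Real.sqrt ((Real.sqrt a + Real.sqrt b) ^ 2) :=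
    Real.sqrt_le_sqrt (by nlinarith [mul_nonneg h3 h4])
  rwa [Real.sqrt_sq (by positivity)] at key

lemma glower (l ξ η d : ℝ) (hl : 1 < l) (hξ : 0 ≤ ξ) (hη : 0 ≤ η) :
    (ξ - l) ^ 2 + (η - l) ^ 2 - 2 * l ^ 2 - 2 * Real.sqrt (2 * |d|)
      ≤ gfun l ξ η d := by
  have hl0 : (0:ℝ) < l := by linarith
  have hL : 0 ≤ l ^ 2 + 1 / l ^ 2 := by positivity
  have hM : 0 ≤ l ^ 2 - 1 / l ^ 2 := by
    have h1 : 1 / l ^ 2 ≤ 1 := by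
      rw [div_le_one (by positivity)]; nlinarith
    nlinarith
  have hs : Real.sqrt (ξ ^ 2 * η ^ 2 - d ^ 2) ≤ ξ * η := by
    calc Real.sqrt (ξ ^ 2 * η ^ 2 - d ^ 2) ≤ Real.sqrt (ξ ^ 2 * η ^ 2) :=
          Real.sqrt_le_sqrt (by nlinarith [sq_nonneg d])
      _ = ξ * η := by
          rw [show ξ ^ 2 * η ^ 2 = (ξ * η) ^ 2 by ring,
            Real.sqrt_sq (mul_nonneg hξ hη)]
  have hA : Afun l ξ η d ≤ l ^ 2 * (ξ ^ 2 + η ^ 2) + 2 * |d| := by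
    unfold Afun
    have h1 : (l ^ 2 - 1 / l ^ 2) * Real.sqrt (ξ ^ 2 * η ^ 2 - d ^ 2)
        ≤ (l ^ 2 - 1 / l ^ 2) * (ξ * η) := mul_le_mul_of_nonneg_left hs hM
    have h2 : d ≤ |d| := le_abs_self d
    nlinarith [sq_nonneg (ξ - η), mul_nonneg hM (sq_nonneg (ξ - η))]
  have hsA : Real.sqrt (Afun l ξ η d) ≤ l * (ξ + η) + Real.sqrt (2 * |d|) := by
    calc Real.sqrt (Afun l ξ η d)
        ≤ Real.sqrt (l ^ 2 * (ξ ^ 2 + η ^ 2) + 2 * |d|) := Real.sqrt_le_sqrt hA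
      _ ≤ Real.sqrt (l ^ 2 * (ξ ^ 2 + η ^ 2)) + Real.sqrt (2 * |d|) :=
          my_sqrt_add_le _ _ (by positivity) (by positivity)
      _ = l * Real.sqrt (ξ ^ 2 + η ^ 2) + Real.sqrt (2 * |d|) := by
          rw [Real.sqrt_mul (by positivity), Real.sqrt_sq hl0.le]
      _ ≤ l * (ξ + η) + Real.sqrt (2 * |d|) := by
          have h5 : Real.sqrt (ξ ^ 2 + η ^ 2) ≤ ξ + η := by
            rw [show ξ + η = Real.sqrt ((ξ + η) ^ 2) from
              (Real.sqrt_sq (by linarith)).symm]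
            exact Real.sqrt_le_sqrt (by nlinarith [mul_nonneg hξ hη])
          nlinarith
  unfold gfun
  nlinarith

/-- For every `(x, y, d) ∈ ℝ³` with `x, y ≥ 0` and `xy ≥ |d|`, the infimum
`h(x,y,d) = inf{ g(ξ,η,d) : ξ ≥ x, η ≥ y }` is attained. -/
theorem h_inf_attained (l : ℝ) (hl : 1 < l) (x y d : ℝ)
    (hx : 0 ≤ x) (hy : 0 ≤ y) (hd : |d| ≤ x * y) :
    ∃ ξ η : ℝ, x ≤ ξ ∧ y ≤ η ∧ gfun l ξ η d = hfun l x y d := by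
  set g0 := gfun l x y d with hg0
  set B := |g0| + 2 * l ^ 2 + 2 * Real.sqrt (2 * |d|) + 1 with hB
  have hB1 : 1 ≤ B := by
    have := abs_nonneg g0
    have := Real.sqrt_nonneg (2 * |d|)
    nlinarith
  set R := max x (max y (l + B)) with hR
  have hxR : x ≤ R := le_max_left _ _
  have hyR : y ≤ R := le_trans (le_max_left _ _) (le_max_right _ _)
  have hlBR : l + B ≤ R := le_trans (le_max_right _ _) (le_max_right _ _)
  -- growth claim
  have growth : ∀ ξ' η' : ℝ, x ≤ ξ' → y ≤ η' → (R < ξ' ∨ R < η') →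
      g0 ≤ gfun l ξ' η' d := by
    intro ξ' η' h1 h2 h3
    have hξ0 : 0 ≤ ξ' := le_trans hx h1
    have hη0 : 0 ≤ η' := le_trans hy h2
    have hgl := glower l ξ' η' d hl hξ0 hη0
    have habs := le_abs_self g0
    have key : B ≤ (ξ' - l) ^ 2 + (η' - l) ^ 2 := by
      rcases h3 with h3 | h3
      · have hb : B ≤ ξ' - l := by linarith
        nlinarith [sq_nonneg (η' - l)]
      · have hb : B ≤ η' - l := by linarith
        nlinarith [sq_nonneg (ξ' - l)]
    nlinarith
  -- continuity
  have hf : Continuous fun p : ℝ × ℝ => gfun l p.1 p.2 d := by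
    unfold gfun Afun
    fun_prop
  -- compact minimum
  have hK : IsCompact (Set.Icc x R ×ˢ Set.Icc y R) :=
    isCompact_Icc.prod isCompact_Icc
  have hne : (Set.Icc x R ×ˢ Set.Icc y R).Nonempty :=
    ⟨(x, y), by simp [Set.mem_prod, hxR, hyR]⟩
  obtain ⟨p, hpK, hpmin⟩ := hK.exists_isMinOn hne hf.continuousOn
  rw [Set.mem_prod, Set.mem_Icc, Set.mem_Icc] at hpK
  refine ⟨p.1, p.2, hpK.1.1, hpK.2.1, ?_⟩
  have hxy_mem : (x, y) ∈ Set.Icc x R ×ˢ Set.Icc y R := by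
    simp [Set.mem_prod, hxR, hyR]
  have hmin_xy : gfun l p.1 p.2 d ≤ g0 := hpmin hxy_mem
  have hleast : IsLeast {r | ∃ ξ η : ℝ, x ≤ ξ ∧ y ≤ η ∧ r = gfun l ξ η d}
      (gfun l p.1 p.2 d) := by
    constructor
    · exact ⟨p.1, p.2, hpK.1.1, hpK.2.1, rfl⟩
    · rintro r ⟨ξ', η', h1, h2, rfl⟩
      by_cases hc : ξ' ≤ R ∧ η' ≤ R
      · have hm : (ξ', η') ∈ Set.Icc x R ×ˢ Set.Icc y R := ⟨⟨h1, hc.1⟩, ⟨h2, hc.2⟩⟩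
        exact hpmin hm
      · have h3 : R < ξ' ∨ R < η' := by
          rcases not_and_or.mp hc with h | h
          · exact Or.inl (lt_of_not_ge h)
          · exact Or.inr (lt_of_not_ge h)
        exact le_trans hmin_xy (growth ξ' η' h1 h2 h3)
  exact (hleast.csInf_eq).symm
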